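/- Let M ∈ ℝ^{d×d} be a matrix all of whose complex eigenvalues have strictly positive real part, and let a : [0, ∞) → [0, ∞) be continuous. For x₀ ∈ ℝ^d define δ(t) = exp(−(∫₀ᵗ a(s) ds)·M)·x₀. Then δ(t) → 0 as t → ∞ for every initial condition x₀ ∈ ℝ^d if and only if ∫₀^∞ a(s) ds = ∞. -/

import Mathlib

/-!
On the generalized eigenspace of an eigenvalue `μ` of `M`, `exp (-s • M)` acts as `e^{-sμ}`
times a polynomial in `s`, which tends to `0` because `Re μ > 0`; since `ℂⁿ` is the sum of
these spaces, `exp (-s • M) x → 0` as `s → ∞`, and it remains to substitute `s = ∫₀ᵗ a → ∞`.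
Conversely, `∫₀ᵗ a` is nondecreasing, so if it does not diverge it converges to some `L`, and
then `δ(t) → exp (-L • M) x₀`, which is nonzero for `x₀ ≠ 0` because `exp (-L • M)` is
invertible.
-/

open Filter NormedSpace Matrix Finset Topology Set
open scoped Nat

theorem Complex.tendsto_exp_neg_mul_mul_pow_atTop {μ : ℂ} (hμ : 0 < μ.re) (i : ℕ) :
    Tendsto (fun s : ℝ => Complex.exp (-s * μ) * (-s : ℂ) ^ i) atTop (𝓝 0) := by
  rw [tendsto_zero_iff_norm_tendsto_zero]
  refine (tendsto_rpow_mul_exp_neg_mul_atTop_nhds_zero i μ.re hμ).congr' ?_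
  filter_upwards [eventually_ge_atTop 0] with s hs
  simp [Complex.norm_exp, abs_of_nonneg hs, mul_comm]

theorem MonotoneOn.tendsto_atTop_or_tendsto_nhds_of_Ici {ι α : Type*} [LinearOrder ι]
    [ConditionallyCompleteLinearOrder α] [TopologicalSpace α] [OrderTopology α] {f : ι → α}
    {b : ι} (hf : MonotoneOn f (Ici b)) : Tendsto f atTop atTop ∨ ∃ l, Tendsto f atTop (𝓝 l) := by
  have hg : Monotone fun t => f (max b t) := fun u v huv =>
    hf le_sup_left le_sup_left (max_le_max le_rfl huv)
  have hgf : (fun t => f (max b t)) =ᶠ[atTop] f :=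
    (eventually_ge_atTop b).mono fun t ht => by simp only [max_eq_right ht]
  exact (tendsto_atTop_of_monotone hg).imp (·.congr' hgf) fun ⟨l, hl⟩ => ⟨l, hl.congr' hgf⟩

theorem monotoneOn_intervalIntegral_of_nonneg {a : ℝ → ℝ} {b : ℝ}
    (ha_cont : ContinuousOn a (Ici b)) (ha_nonneg : ∀ t ∈ Ici b, 0 ≤ a t) :
    MonotoneOn (fun t => ∫ s in b..t, a s) (Ici b) := by
  intro u hu v _ huv
  have hsub : uIcc b v ⊆ Ici b := fun t ht => (uIcc_of_le (hu.trans huv) ▸ ht).1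
  exact intervalIntegral.integral_mono_interval le_rfl hu huv
    ((MeasureTheory.ae_restrict_mem measurableSet_Ioc).mono fun t ht => ha_nonneg t ht.1.le)
    (ha_cont.mono hsub).intervalIntegrable

namespace Matrix

variable {n : Type*} [Fintype n] [DecidableEq n]

open scoped Norms.Operator in
theorem continuous_exp {𝕜 : Type*} [RCLike 𝕜] :
    Continuous (exp : Matrix n n 𝕜 → Matrix n n 𝕜) :=
  exp_continuous

open scoped Norms.Operator in
theorem map_exp {α β : Type*} [RCLike α] [RCLike β] (f : α →+* β) (hf : Continuous f)
    (B : Matrix n n α) : (exp B).map f = exp (B.map f) :=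
  NormedSpace.map_exp f.mapMatrix (continuous_id.matrix_map hf) B

open scoped Norms.Operator in
theorem exp_smul_one {𝕜 : Type*} [RCLike 𝕜] (c : 𝕜) :
    exp (c • (1 : Matrix n n 𝕜)) = exp c • 1 := by
  rw [← Algebra.algebraMap_eq_smul_one, ← Algebra.algebraMap_eq_smul_one, algebraMap_exp_comm]
  rfl

theorem exp_mulVec_ne_zero {𝕜 : Type*} [RCLike 𝕜] (B : Matrix n n 𝕜) {x : n → 𝕜}
    (hx : x ≠ 0) : exp B *ᵥ x ≠ 0 := by
  simpa using (mulVec_injective_iff_isUnit.mpr (isUnit_exp B)).ne hx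

open scoped Norms.Operator in
theorem exp_mulVec_eq_sum_of_pow_mulVec_eq_zero {𝕜 : Type*} [RCLike 𝕜] {N : Matrix n n 𝕜}
    {z : n → 𝕜} {k : ℕ} (h : (N ^ k) *ᵥ z = 0) :
    exp N *ᵥ z = ∑ i ∈ range k, ((i ! : 𝕜)⁻¹ • N ^ i) *ᵥ z := by
  have hexp : HasSum (fun i => ((i ! : 𝕜)⁻¹ • N ^ i) *ᵥ z) (exp N *ᵥ z) :=
    (exp_series_hasSum_exp' N).map (mulVec.addMonoidHomLeft z)
      (continuous_id.matrix_mulVec continuous_const)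
  refine hexp.unique (hasSum_sum_of_ne_finset_zero fun i hi => ?_)
  rw [← Nat.sub_add_cancel (not_lt.mp (mt mem_range.mpr hi)), pow_add, smul_mulVec,
    ← mulVec_mulVec, h, mulVec_zero, smul_zero]

theorem exp_smul_mulVec_eq_sum_of_pow_sub_mulVec_eq_zero {𝕜 : Type*} [RCLike 𝕜]
    {A : Matrix n n 𝕜} {μ : 𝕜} {z : n → 𝕜} {k : ℕ} (h : ((A - μ • 1) ^ k) *ᵥ z = 0) (t : 𝕜) :
    exp (t • A) *ᵥ z =
      ∑ i ∈ range k, (exp (t * μ) * t ^ i) • (((i ! : 𝕜)⁻¹ • (A - μ • 1) ^ i) *ᵥ z) := by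
  have hsplit : t • A = (t * μ) • (1 : Matrix n n 𝕜) + t • (A - μ • 1) := by
    rw [smul_sub, smul_smul]; abel
  have hnil : ((t • (A - μ • 1)) ^ k) *ᵥ z = 0 := by
    rw [smul_pow, smul_mulVec, h, smul_zero]
  rw [hsplit, exp_add_of_commute _ _ ((Commute.one_left _).smul_left _ |>.smul_right _),
    exp_smul_one, smul_mul_assoc, one_mul, smul_mulVec,
    exp_mulVec_eq_sum_of_pow_mulVec_eq_zero hnil, smul_sum]
  refine sum_congr rfl fun i _ => ?_
  rw [smul_pow, smul_comm, smul_mulVec, smul_mulVec, mul_smul]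

theorem exists_pow_sub_smul_one_mulVec_eq_zero_of_mem_maxGenEigenspace {𝕜 : Type*} [Field 𝕜]
    {A : Matrix n n 𝕜} {μ : 𝕜} {z : n → 𝕜}
    (hz : z ∈ Module.End.maxGenEigenspace (toLin' A) μ) :
    ∃ k : ℕ, ((A - μ • 1) ^ k) *ᵥ z = 0 := by
  obtain ⟨k, hk⟩ := (Module.End.mem_maxGenEigenspace _ _ _).mp hz
  exact ⟨k, by rwa [← toLin'_apply, toLin'_pow, map_sub, map_smul, toLin'_one]⟩

theorem mem_spectrum_of_mem_maxGenEigenspace {𝕜 : Type*} [Field 𝕜] {A : Matrix n n 𝕜} {μ : 𝕜}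
    {z : n → 𝕜} (hz : z ∈ Module.End.maxGenEigenspace (toLin' A) μ) (hz0 : z ≠ 0) :
    μ ∈ spectrum 𝕜 A := by
  obtain ⟨k, hk⟩ := (Module.End.mem_maxGenEigenspace _ _ _).mp hz
  rw [← spectrum_toLin']
  refine Module.End.hasEigenvalue_iff_mem_spectrum.mp
    (Module.End.hasEigenvalue_of_hasGenEigenvalue (k := k) ?_)
  exact (Submodule.ne_bot_iff _).mpr ⟨z, Module.End.mem_genEigenspace_nat.mpr hk, hz0⟩

theorem tendsto_exp_neg_ofReal_smul_mulVec_of_mem_maxGenEigenspace {A : Matrix n n ℂ} {μ : ℂ}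
    (hμ : 0 < μ.re) {z : n → ℂ} (hz : z ∈ Module.End.maxGenEigenspace (toLin' A) μ) :
    Tendsto (fun s : ℝ => exp ((-s : ℂ) • A) *ᵥ z) atTop (𝓝 0) := by
  obtain ⟨k, hk⟩ := exists_pow_sub_smul_one_mulVec_eq_zero_of_mem_maxGenEigenspace hz
  simp_rw [exp_smul_mulVec_eq_sum_of_pow_sub_mulVec_eq_zero hk, ← Complex.exp_eq_exp_ℂ]
  simpa using tendsto_finsetSum (range k) fun i _ =>
    (Complex.tendsto_exp_neg_mul_mul_pow_atTop hμ i).smul_const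
      (((i ! : ℂ)⁻¹ • (A - μ • 1) ^ i) *ᵥ z)

theorem tendsto_exp_neg_ofReal_smul_mulVec {A : Matrix n n ℂ}
    (hA : ∀ μ ∈ spectrum ℂ A, 0 < μ.re) (z : n → ℂ) :
    Tendsto (fun s : ℝ => exp ((-s : ℂ) • A) *ᵥ z) atTop (𝓝 0) := by
  have hz : z ∈ ⨆ μ, Module.End.maxGenEigenspace (toLin' A) μ := by
    rw [Module.End.iSup_maxGenEigenspace_eq_top]; trivial
  refine Submodule.iSup_induction
    (motive := fun z => Tendsto (fun s : ℝ => exp ((-s : ℂ) • A) *ᵥ z) atTop (𝓝 0))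
    _ hz ?_ ?_ ?_
  · intro μ z hz
    rcases eq_or_ne z 0 with rfl | hz0
    · simp
    exact tendsto_exp_neg_ofReal_smul_mulVec_of_mem_maxGenEigenspace
      (hA μ (mem_spectrum_of_mem_maxGenEigenspace hz hz0)) hz
  · simp
  · intro x y hx hy
    simpa [mulVec_add] using hx.add hy

theorem tendsto_exp_neg_smul_mulVec {M : Matrix n n ℝ}
    (hM : ∀ μ ∈ spectrum ℂ (M.map (Complex.ofReal ·)), 0 < μ.re) (x : n → ℝ) :
    Tendsto (fun s : ℝ => exp ((-s) • M) *ᵥ x) atTop (𝓝 0) := by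
  have hofReal : ∀ s : ℝ,
      exp ((-s : ℂ) • M.map (Complex.ofReal ·)) *ᵥ (fun i => (x i : ℂ)) =
        fun i => ((exp ((-s) • M) *ᵥ x) i : ℂ) := by
    intro s
    ext i
    change _ = Complex.ofRealHom _
    rw [RingHom.map_mulVec, map_exp _ Complex.continuous_ofReal]
    congr 3
    ext
    simp
  have hre : Continuous fun z : n → ℂ => fun i => (z i).re :=
    continuous_pi fun i => Complex.continuous_re.comp (continuous_apply i)
  have := (hre.tendsto 0).comp (tendsto_exp_neg_ofReal_smul_mulVec hM fun i => (x i : ℂ))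
  simp only [Function.comp_def, hofReal, Complex.ofReal_re] at this
  exact this

end Matrix

/-- Let `M` be a real matrix all of whose complex eigenvalues have strictly positive real
part and let `a : [0,∞) → [0,∞)` be continuous. The solution
`δ(t) = exp (-(∫₀ᵗ a) • M) ⬝ x₀` of `δ' = -a(t) M δ` tends to `0` for every initial
condition `x₀` if and only if `∫₀^∞ a = ∞`. -/
theorem containment_noise_free_iff_gain_integral_diverges
    (d : ℕ) (hd : 0 < d) (M : Matrix (Fin d) (Fin d) ℝ)
    (hM : ∀ μ ∈ spectrum ℂ (M.map (Complex.ofReal ·)), 0 < μ.re)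
    (a : ℝ → ℝ) (ha_cont : ContinuousOn a (Set.Ici 0))
    (ha_nonneg : ∀ t ∈ Set.Ici (0 : ℝ), 0 ≤ a t) :
    (∀ x₀ : Fin d → ℝ,
        Tendsto (fun t : ℝ =>
          (NormedSpace.exp ((-(∫ s in (0:ℝ)..t, a s)) • M)).mulVec x₀)
          atTop (nhds 0)) ↔
      Tendsto (fun t : ℝ => ∫ s in (0:ℝ)..t, a s) atTop atTop := by
  refine ⟨fun hdecay => ?_, fun hgain x₀ => (tendsto_exp_neg_smul_mulVec hM x₀).comp hgain⟩
  refine (monotoneOn_intervalIntegral_of_nonneg ha_cont ha_nonneg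
    |>.tendsto_atTop_or_tendsto_nhds_of_Ici).resolve_right ?_
  rintro ⟨L, hL⟩
  have : NeZero d := ⟨hd.ne'⟩
  obtain ⟨x₀, hx₀⟩ := exists_ne (0 : Fin d → ℝ)
  have hcont : Continuous fun c : ℝ => exp ((-c) • M) *ᵥ x₀ :=
    (continuous_exp.comp (continuous_neg.smul continuous_const)).matrix_mulVec continuous_const
  exact exp_mulVec_ne_zero _ hx₀ (tendsto_nhds_unique ((hcont.tendsto L).comp hL) (hdecay x₀))
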